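/- arXiv:1410.4326 — 5 statements merged into one kernel-verified Lean document; each statement's English description precedes it below -/
import Mathlib

section
/- Let G and G' be finite groups whose orders |G| and |G'| are coprime. Then for every natural number m, a_m(G × G') = Σ_{d ∣ m} a_d(G) · a_{m/d}(G'), where the sum is over positive divisors d of m. -/
/-!
If `|G|` and `|G'|` are coprime, every subgroup `H ≤ G × G'` is the product of its two
projections: for `(a, b) ∈ H`, the power `(a, b) ^ |G'| = (a ^ |G'|, 1)` lies in `H`, and since
`|G'|` is coprime to the order of `a`, a further power of it is `(a, 1)`. Hence subgroups of
`G × G'` of order `m` correspond to pairs of subgroups `A ≤ G`, `B ≤ G'` with `|A| |B| = m`,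
and counting these pairs according to `|A|` gives the Dirichlet convolution.
-/

/-- `subCount G m` is the number of subgroups of `G` of order `m`,
i.e. the coefficient `a_m(G)` of the zeta function `ζ_G(s) = Σ_m a_m(G) m^{-s}`. -/
noncomputable def subCount (G : Type*) [Group G] (m : ℕ) : ℕ :=
  Nat.card {H : Subgroup G // Nat.card H = m}

namespace Subgroup

variable {G G' : Type*} [Group G] [Group G']

theorem mk_one_mem_of_coprime {H : Subgroup (G × G')} {a : G} {b : G'} (hab : (a, b) ∈ H) {n : ℕ}
    (hb : b ^ n = 1) (hn : n.Coprime (orderOf a)) : (a, 1) ∈ H := by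
  obtain ⟨k, hk⟩ := exists_pow_eq_self_of_coprime hn
  have hpow : (a, b) ^ (n * k) = (a, (1 : G')) := by
    rw [pow_mul, Prod.pow_mk, Prod.pow_mk, hk, hb, one_pow]
  exact hpow ▸ H.pow_mem hab _

theorem one_mk_mem_of_coprime {H : Subgroup (G × G')} {a : G} {b : G'} (hab : (a, b) ∈ H) {n : ℕ}
    (ha : a ^ n = 1) (hn : n.Coprime (orderOf b)) : (1, b) ∈ H := by
  obtain ⟨k, hk⟩ := exists_pow_eq_self_of_coprime hn
  have hpow : (a, b) ^ (n * k) = ((1 : G), b) := by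
    rw [pow_mul, Prod.pow_mk, Prod.pow_mk, hk, ha, one_pow]
  exact hpow ▸ H.pow_mem hab _

theorem prod_map_fst_map_snd_of_coprime (h : (Nat.card G).Coprime (Nat.card G'))
    (H : Subgroup (G × G')) :
    (H.map (MonoidHom.fst G G')).prod (H.map (MonoidHom.snd G G')) = H := by
  refine le_antisymm ?_ (le_prod_iff.2 ⟨le_rfl, le_rfl⟩)
  rintro ⟨x, y⟩ ⟨⟨⟨a, b⟩, hab, rfl⟩, ⟨⟨c, d⟩, hcd, rfl⟩⟩
  have hx : (a, (1 : G')) ∈ H := mk_one_mem_of_coprime hab pow_card_eq_one'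
    (h.coprime_dvd_left (_root_.orderOf_dvd_natCard a)).symm
  have hy : ((1 : G), d) ∈ H := one_mk_mem_of_coprime hcd pow_card_eq_one'
    (h.coprime_dvd_right (_root_.orderOf_dvd_natCard d))
  simpa using H.mul_mem hx hy

theorem map_fst_prod (A : Subgroup G) (B : Subgroup G') :
    (A.prod B).map (MonoidHom.fst G G') = A := by
  ext x
  simpa [mem_map, mem_prod] using fun _ => ⟨1, B.one_mem⟩

theorem map_snd_prod (A : Subgroup G) (B : Subgroup G') :
    (A.prod B).map (MonoidHom.snd G G') = B := by
  ext x
  simpa [mem_map, mem_prod] using fun _ => ⟨1, A.one_mem⟩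

theorem card_prod (A : Subgroup G) (B : Subgroup G') :
    Nat.card (A.prod B) = Nat.card A * Nat.card B := by
  rw [Nat.card_congr (A.prodEquiv B).toEquiv, Nat.card_prod]

noncomputable def prodEquivOfCoprime (h : (Nat.card G).Coprime (Nat.card G')) :
    Subgroup G × Subgroup G' ≃ Subgroup (G × G') where
  toFun p := p.1.prod p.2
  invFun H := (H.map (MonoidHom.fst G G'), H.map (MonoidHom.snd G G'))
  left_inv _ := Prod.ext (map_fst_prod _ _) (map_snd_prod _ _)
  right_inv := prod_map_fst_map_snd_of_coprime h

theorem card_prodEquivOfCoprime (h : (Nat.card G).Coprime (Nat.card G'))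
    (p : Subgroup G × Subgroup G') :
    Nat.card (prodEquivOfCoprime h p) = Nat.card p.1 * Nat.card p.2 :=
  card_prod p.1 p.2

end Subgroup

theorem Nat.card_subtype_mul_eq {α β : Type*} [Finite α] [Finite β] (f : α → ℕ) (g : β → ℕ)
    {m : ℕ} (hm : m ≠ 0) :
    Nat.card {p : α × β // f p.1 * g p.2 = m} =
      ∑ d ∈ m.divisors, Nat.card {a // f a = d} * Nat.card {b // g b = m / d} := by
  let e : {p : α × β // f p.1 * g p.2 = m} ≃
      Σ q : m.divisorsAntidiagonal, {a // f a = q.1.1} × {b // g b = q.1.2} :=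
    { toFun p := ⟨⟨(f p.1.1, g p.1.2), Nat.mem_divisorsAntidiagonal.2 ⟨p.2, hm⟩⟩,
        ⟨p.1.1, rfl⟩, ⟨p.1.2, rfl⟩⟩
      invFun x := ⟨(x.2.1, x.2.2), by
        rw [x.2.1.2, x.2.2.2]; exact (Nat.mem_divisorsAntidiagonal.1 x.1.2).1⟩
      left_inv _ := rfl
      right_inv := by
        rintro ⟨⟨⟨d, d'⟩, _⟩, ⟨a, ha⟩, ⟨b, hb⟩⟩
        dsimp only at ha hb
        subst ha hb
        rfl }
  rw [Nat.card_congr e, Nat.card_sigma, ← Nat.sum_divisorsAntidiagonal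
    (fun d d' => Nat.card {a // f a = d} * Nat.card {b // g b = d'})]
  simp only [Nat.card_prod]
  exact Finset.sum_coe_sort m.divisorsAntidiagonal
    (fun q => Nat.card {a // f a = q.1} * Nat.card {b // g b = q.2})

theorem subCount_zero (G : Type*) [Group G] [Finite G] : subCount G 0 = 0 := by
  rw [subCount, Nat.card_eq_zero]
  exact Or.inl ⟨fun H => Nat.card_pos.ne' H.2⟩

/-- If `|G|` and `|G'|` are coprime then
`a_m(G × G') = Σ_{d ∣ m} a_d(G) · a_{m/d}(G')`. -/
theorem stmt_1 (G G' : Type*) [Group G] [Group G'] [Finite G] [Finite G']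
    (h : Nat.Coprime (Nat.card G) (Nat.card G')) :
    ∀ m : ℕ, subCount (G × G') m = ∑ d ∈ m.divisors, subCount G d * subCount G' (m / d) := by
  intro m
  rcases eq_or_ne m 0 with rfl | hm
  · rw [subCount_zero, Nat.divisors_zero, Finset.sum_empty]
  let e : {p : Subgroup G × Subgroup G' // Nat.card p.1 * Nat.card p.2 = m} ≃
      {H : Subgroup (G × G') // Nat.card H = m} :=
    (Subgroup.prodEquivOfCoprime h).subtypeEquiv fun p => by
      rw [Subgroup.card_prodEquivOfCoprime]
  rw [subCount, ← Nat.card_congr e]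
  exact Nat.card_subtype_mul_eq (fun A : Subgroup G => Nat.card A)
    (fun B : Subgroup G' => Nat.card B) hm
end

section
/- Let p be a prime and m > n ≥ 1 integers, with m ≥ 3 if p = 2. Let G be a group of order p^{m+n} generated by two elements σ and τ satisfying: the order of σ is p^m, the order of τ is p^n, and τστ^{-1} = σ^{1+p^{m-1}} (i.e., G is the group G_p(m,n) = ⟨σ, τ ∣ σ^{p^m} = τ^{p^n} = 1, τστ^{-1} = σ^{1+p^{m-1}}⟩). Then G is non-abelian, and for every natural number k, a_k(G) = a_k(C_{p^m} × C_{p^n}), where C_{p^m} × C_{p^n} = (ℤ/p^mℤ) × (ℤ/p^nℤ). In particular, the non-abelian group G and the abelian group C_{p^m} × C_{p^n} have the same zeta function. -/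
/-- `addSubCount A m` is the number of (additive) subgroups of `A` of order `m`. -/
noncomputable def addSubCount (A : Type*) [AddGroup A] (m : ℕ) : ℕ :=
  Nat.card {H : AddSubgroup A // Nat.card H = m}

private lemma sconj_pow {G : Type*} [Group G] {σ τ : G} {q : ℕ}
    (h : τ * σ = σ ^ (1 + q) * τ) (c : ℕ) :
    τ * σ ^ c = σ ^ (c * (1 + q)) * τ := by
  induction c with
  | zero => simp
  | succ c ih =>
    rw [pow_succ, ← mul_assoc, ih, mul_assoc, h, ← mul_assoc, ← pow_add]
    have : c * (1 + q) + (1 + q) = (c + 1) * (1 + q) := by ring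
    rw [this]

private lemma sconj_pow2 {G : Type*} [Group G] {σ τ : G} {q : ℕ}
    (h : τ * σ = σ ^ (1 + q) * τ) (b c : ℕ) :
    τ ^ b * σ ^ c = σ ^ (c * (1 + q) ^ b) * τ ^ b := by
  induction b generalizing c with
  | zero => simp
  | succ b ih =>
    rw [pow_succ, mul_assoc, sconj_pow h, ← mul_assoc, ih, mul_assoc, ← pow_succ]
    have : c * (1 + q) * (1 + q) ^ b = c * (1 + q) ^ (b + 1) := by ring
    rw [this]

private lemma modeq_pow (Mo q : ℕ) (hq : Mo ∣ q * q) (b : ℕ) :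
    (1 + q) ^ b ≡ 1 + b * q [MOD Mo] := by
  induction b with
  | zero => simpa using Nat.ModEq.refl 1
  | succ b ih =>
    calc (1 + q) ^ (b + 1) = (1 + q) ^ b * (1 + q) := pow_succ _ _
      _ ≡ (1 + b * q) * (1 + q) [MOD Mo] := ih.mul_right _
      _ = (1 + (b + 1) * q) + b * (q * q) := by ring
      _ ≡ (1 + (b + 1) * q) + 0 [MOD Mo] :=
          Nat.ModEq.add_left _ (Nat.modEq_zero_iff_dvd.mpr (hq.mul_left b))
      _ = 1 + (b + 1) * q := by ring

private lemma binom_dvd (p m : ℕ) (hp : p.Prime) (hm : 2 ≤ m) (h2 : p = 2 → 3 ≤ m) :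
    p ^ m ∣ (p ^ (m - 1)).choose 2 * p ^ (m - 1) := by
  rcases hp.eq_two_or_odd' with h | hodd
  · subst h
    have hm3 : 3 ≤ m := h2 rfl
    have hq : 2 ^ (m - 1) = 2 * 2 ^ (m - 2) := by
      rw [← pow_succ']
      congr 1
      omega
    have e0 : 2 ^ (m - 1) * (2 ^ (m - 1) - 1) = 2 * (2 ^ (m - 2) * (2 ^ (m - 1) - 1)) := by
      rw [hq]; ring
    have e1 : (2 ^ (m - 1)).choose 2 = 2 ^ (m - 2) * (2 ^ (m - 1) - 1) := by
      rw [Nat.choose_two_right, e0, Nat.mul_div_cancel_left _ (by norm_num)]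
    rw [e1]
    have e2 : 2 ^ (m - 2) * (2 ^ (m - 1) - 1) * 2 ^ (m - 1)
        = 2 ^ (m - 2 + (m - 1)) * (2 ^ (m - 1) - 1) := by
      rw [pow_add]; ring
    rw [e2]
    exact Dvd.dvd.mul_right (pow_dvd_pow 2 (by omega)) _
  · have hoq : Odd (p ^ (m - 1)) := hodd.pow
    obtain ⟨r, hr⟩ := hoq
    have e1 : (p ^ (m - 1)).choose 2 = p ^ (m - 1) * r := by
      rw [Nat.choose_two_right]
      have : p ^ (m - 1) * (p ^ (m - 1) - 1) = 2 * (p ^ (m - 1) * r) := by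
        rw [hr, Nat.add_sub_cancel]; ring
      rw [this, Nat.mul_div_cancel_left _ (by norm_num)]
    rw [e1]
    have e2 : p ^ (m - 1) * r * p ^ (m - 1) = p ^ (m - 1 + (m - 1)) * r := by
      rw [pow_add]; ring
    rw [e2]
    exact Dvd.dvd.mul_right (pow_dvd_pow p (by omega)) _

/-- Let `p` be prime, `m > n ≥ 1`, with `m ≥ 3` if `p = 2`.  If `G` is a group of
order `p^{m+n}` generated by `σ, τ` with `orderOf σ = p^m`, `orderOf τ = p^n` and
`τ σ τ⁻¹ = σ^{1+p^{m-1}}` (i.e. `G ≅ G_p(m,n)`), then `G` is non-abelian and has the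
same zeta function as the abelian group `C_{p^m} × C_{p^n} = ℤ/p^mℤ × ℤ/p^nℤ`. -/
theorem stmt_5 (p m n : ℕ) (hp : p.Prime) (hn : 1 ≤ n) (hmn : n < m)
    (h2 : p = 2 → 3 ≤ m)
    (G : Type*) [Group G] [Finite G] (hcard : Nat.card G = p ^ (m + n))
    (σ τ : G) (hgen : Subgroup.closure {σ, τ} = ⊤)
    (hσ : orderOf σ = p ^ m) (hτ : orderOf τ = p ^ n)
    (hrel : τ * σ * τ⁻¹ = σ ^ (1 + p ^ (m - 1))) :
    (∃ a b : G, a * b ≠ b * a) ∧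
      ∀ k : ℕ, subCount G k = addSubCount (ZMod (p ^ m) × ZMod (p ^ n)) k := by
  have hp2 : 2 ≤ p := hp.two_le
  set q : ℕ := p ^ (m - 1) with hqdef
  have hm2 : 2 ≤ m := by omega
  have hMq : p ^ m ∣ q * q := by
    rw [hqdef, ← pow_add]; exact pow_dvd_pow p (by omega)
  have hNq : (p ^ n) ∣ q := by rw [hqdef]; exact pow_dvd_pow p (by omega)
  have hbin : p ^ m ∣ q.choose 2 * q := binom_dvd p m hp hm2 h2
  haveI : NeZero (p ^ m) := ⟨(pow_pos hp.pos m).ne'⟩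
  haveI : NeZero (p ^ n) := ⟨(pow_pos hp.pos n).ne'⟩
  have hσe : ∀ {x y : ℕ}, x ≡ y [MOD p ^ m] → σ ^ x = σ ^ y := by
    intro x y h; exact pow_eq_pow_iff_modEq.mpr (by rwa [hσ])
  have hτe : ∀ {x y : ℕ}, x ≡ y [MOD p ^ n] → τ ^ x = τ ^ y := by
    intro x y h; exact pow_eq_pow_iff_modEq.mpr (by rwa [hτ])
  have hστ : τ * σ = σ ^ (1 + q) * τ := mul_inv_eq_iff_eq_mul.mp hrel
  have key : ∀ b c : ℕ, τ ^ b * σ ^ c = σ ^ (c + b * c * q) * τ ^ b := by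
    intro b c
    rw [sconj_pow2 hστ]
    congr 1
    apply hσe
    calc c * (1 + q) ^ b ≡ c * (1 + b * q) [MOD p ^ m] :=
          Nat.ModEq.mul_left c (modeq_pow _ q hMq b)
      _ = c + b * c * q := by ring
  have mul4 : ∀ a b c d : ℕ,
      (σ ^ a * τ ^ b) * (σ ^ c * τ ^ d) = σ ^ (a + c + b * c * q) * τ ^ (b + d) := by
    intro a b c d
    rw [mul_assoc (σ ^ a), ← mul_assoc (τ ^ b) (σ ^ c), key b c, ← mul_assoc, ← mul_assoc,
      ← pow_add, mul_assoc, ← pow_add]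
    congr 2
    omega
  have hchoose : ∀ k : ℕ, (k + 1).choose 2 = k.choose 2 + k := by
    intro k
    rw [Nat.choose_succ_succ k 1, Nat.choose_one_right]
    exact Nat.add_comm k (k.choose 2)
  have pow4 : ∀ a b k : ℕ,
      (σ ^ a * τ ^ b) ^ k = σ ^ (k * a + k.choose 2 * (a * b * q)) * τ ^ (k * b) := by
    intro a b k
    induction k with
    | zero => simp
    | succ k ih =>
      rw [pow_succ, ih, mul4]
      congr 2
      · rw [hchoose k]; ring
      · ring
  have cent : ∀ a b t : ℕ, (σ ^ a * τ ^ b) * σ ^ (t * q) = σ ^ (a + t * q) * τ ^ b := by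
    intro a b t
    rw [mul_assoc, key b (t * q), ← mul_assoc, ← pow_add]
    congr 1
    apply hσe
    calc a + (t * q + b * (t * q) * q) = (a + t * q) + (b * t) * (q * q) := by ring
      _ ≡ (a + t * q) + 0 [MOD p ^ m] :=
          Nat.ModEq.add_left _ (Nat.modEq_zero_iff_dvd.mpr (hMq.mul_left _))
      _ = a + t * q := by ring
  have M1 : ∀ (H : Subgroup G) (a b : ℕ), σ ^ a * τ ^ b ∈ H →
      ∀ t : ℕ, σ ^ (a * q * t) ∈ H := by
    intro H a b hg t
    have h1 : (σ ^ a * τ ^ b) ^ q = σ ^ (a * q) := by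
      rw [pow4]
      have e1 : τ ^ (q * b) = 1 := by
        have h : q * b ≡ 0 [MOD p ^ n] := Nat.modEq_zero_iff_dvd.mpr (hNq.mul_right b)
        simpa using hτe h
      rw [e1, mul_one]
      apply hσe
      calc q * a + q.choose 2 * (a * b * q) = a * q + (q.choose 2 * q) * (a * b) := by ring
        _ ≡ a * q + 0 [MOD p ^ m] :=
            Nat.ModEq.add_left _ (Nat.modEq_zero_iff_dvd.mpr (hbin.mul_right _))
        _ = a * q := by ring
    have h2 : σ ^ (a * q) ∈ H := h1 ▸ pow_mem hg q
    have h3 := pow_mem h2 t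
    rwa [← pow_mul] at h3
  have M2 : ∀ (H : Subgroup G) (a b c d : ℕ), σ ^ a * τ ^ b ∈ H → σ ^ c * τ ^ d ∈ H →
      σ ^ (a + c) * τ ^ (b + d) ∈ H := by
    intro H a b c d h1 h2
    have h3 : σ ^ (a + c + b * c * q) * τ ^ (b + d) ∈ H := by
      rw [← mul4]; exact mul_mem h1 h2
    have h6 : σ ^ (b * c * q) ∈ H := by
      have e : c * q * b = b * c * q := by ring
      have := M1 H c d h2 b
      rwa [e] at this
    have h5 : (σ ^ (a + c) * τ ^ (b + d)) * σ ^ (b * c * q)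
        = σ ^ (a + c + b * c * q) * τ ^ (b + d) := by
      have := cent (a + c) (b + d) (b * c)
      rwa [show b * c * q = b * c * q from rfl] at this
    have h7 : σ ^ (a + c) * τ ^ (b + d)
        = (σ ^ (a + c + b * c * q) * τ ^ (b + d)) * (σ ^ (b * c * q))⁻¹ := by
      rw [← h5, mul_assoc, mul_inv_cancel, mul_one]
    rw [h7]; exact mul_mem h3 (inv_mem h6)
  have hginv : ∀ g : G, g⁻¹ = g ^ (orderOf g - 1) := by
    intro g
    apply inv_eq_of_mul_eq_one_right
    rw [← pow_succ', Nat.sub_add_cancel (orderOf_pos g), pow_orderOf_eq_one]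
  have exform : ∀ g : G, ∃ a b : ℕ, g = σ ^ a * τ ^ b := by
    have hmulS : ∀ x y : G, (∃ a b, x = σ ^ a * τ ^ b) → (∃ a b, y = σ ^ a * τ ^ b) →
        (∃ a b, x * y = σ ^ a * τ ^ b) := by
      rintro x y ⟨a, b, rfl⟩ ⟨c, d, rfl⟩
      exact ⟨a + c + b * c * q, b + d, mul4 a b c d⟩
    have hpowS : ∀ (x : G), (∃ a b, x = σ ^ a * τ ^ b) → ∀ k : ℕ,
        (∃ a b, x ^ k = σ ^ a * τ ^ b) := by
      intro x hx k
      induction k with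
      | zero => exact ⟨0, 0, by simp⟩
      | succ k ih => rw [pow_succ]; exact hmulS _ _ ih hx
    let S : Subgroup G :=
      { carrier := {g | ∃ a b : ℕ, g = σ ^ a * τ ^ b}
        one_mem' := ⟨0, 0, by simp⟩
        mul_mem' := fun hx hy => hmulS _ _ hx hy
        inv_mem' := by
          intro x hx
          show ∃ a b : ℕ, x⁻¹ = σ ^ a * τ ^ b
          rw [hginv x]; exact hpowS x hx _ }
    have hS : (⊤ : Subgroup G) ≤ S := by
      rw [← hgen]
      refine (Subgroup.closure_le S).mpr ?_
      intro g hg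
      simp only [Set.mem_insert_iff, Set.mem_singleton_iff] at hg
      rcases hg with rfl | rfl
      · exact ⟨1, 0, by simp⟩
      · exact ⟨0, 1, by simp⟩
    intro g; exact hS (Subgroup.mem_top g)
  -- the bijection φ
  let φ : ZMod (p ^ m) × ZMod (p ^ n) → G := fun v => σ ^ v.1.val * τ ^ v.2.val
  have φdef : ∀ v : ZMod (p ^ m) × ZMod (p ^ n), φ v = σ ^ v.1.val * τ ^ v.2.val :=
    fun _ => rfl
  have valcastM : ∀ x : ZMod (p ^ m), ((x.val : ℕ) : ZMod (p ^ m)) = x :=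
    ZMod.natCast_rightInverse
  have valcastN : ∀ x : ZMod (p ^ n), ((x.val : ℕ) : ZMod (p ^ n)) = x :=
    ZMod.natCast_rightInverse
  have φcast : ∀ a b : ℕ, φ ((a : ZMod (p ^ m)), (b : ZMod (p ^ n))) = σ ^ a * τ ^ b := by
    intro a b
    rw [φdef]
    show σ ^ (ZMod.val ((a : ℕ) : ZMod (p ^ m))) * τ ^ (ZMod.val ((b : ℕ) : ZMod (p ^ n))) = _
    rw [ZMod.val_natCast, ZMod.val_natCast,
      hσe (Nat.mod_modEq a (p ^ m)), hτe (Nat.mod_modEq b (p ^ n))]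
  have φeq : ∀ (v : ZMod (p ^ m) × ZMod (p ^ n)) (a b : ℕ),
      v.1 = (a : ZMod (p ^ m)) → v.2 = (b : ZMod (p ^ n)) → φ v = σ ^ a * τ ^ b := by
    intro v a b h1 h2
    have hv : v = ((a : ZMod (p ^ m)), (b : ZMod (p ^ n))) := Prod.ext h1 h2
    rw [hv, φcast]
  have φsurj : Function.Surjective φ := by
    intro g
    obtain ⟨a, b, rfl⟩ := exform g
    exact ⟨((a : ZMod (p ^ m)), (b : ZMod (p ^ n))), φcast a b⟩
  have cardA : Nat.card (ZMod (p ^ m) × ZMod (p ^ n)) = Nat.card G := by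
    rw [Nat.card_prod, Nat.card_zmod, Nat.card_zmod, hcard, ← pow_add]
  have φbij : Function.Bijective φ :=
    (Nat.bijective_iff_surjective_and_card φ).mpr ⟨φsurj, cardA⟩
  -- membership transfer, forward direction
  have hPadd : ∀ (H : Subgroup G) (v w : ZMod (p ^ m) × ZMod (p ^ n)),
      φ v ∈ H → φ w ∈ H → φ (v + w) ∈ H := by
    intro H v w hv hw
    rw [φdef] at hv hw
    have h := M2 H _ _ _ _ hv hw
    have e : φ (v + w) = σ ^ (v.1.val + w.1.val) * τ ^ (v.2.val + w.2.val) := by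
      apply φeq
      · show v.1 + w.1 = _
        push_cast
        rw [valcastM, valcastM]
      · show v.2 + w.2 = _
        push_cast
        rw [valcastN, valcastN]
    rwa [e]
  have hPzero : ∀ H : Subgroup G, φ (0 : ZMod (p ^ m) × ZMod (p ^ n)) ∈ H := by
    intro H
    have e : φ (0 : ZMod (p ^ m) × ZMod (p ^ n)) = σ ^ (0 : ℕ) * τ ^ (0 : ℕ) := by
      apply φeq <;> simp
    rw [e]; simpa using one_mem H
  have hPsmul : ∀ (H : Subgroup G) (v : ZMod (p ^ m) × ZMod (p ^ n)),
      φ v ∈ H → ∀ k : ℕ, φ (k • v) ∈ H := by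
    intro H v hv k
    induction k with
    | zero => simpa using hPzero H
    | succ k ih =>
      rw [succ_nsmul]
      exact hPadd H _ _ ih hv
  -- the forward map
  have Fmem : ∀ (H : Subgroup G) (v : ZMod (p ^ m) × ZMod (p ^ n)),
      φ v ∈ H → -v ∈ (φ ⁻¹' ↑H) := by
    intro H v hv
    have hneg : -v = (addOrderOf v - 1) • v := by
      apply neg_eq_of_add_eq_zero_right
      have h1 : v + (addOrderOf v - 1) • v = ((addOrderOf v - 1) + 1) • v := by
        rw [succ_nsmul']
      rw [h1, Nat.sub_add_cancel (show 1 ≤ addOrderOf v from addOrderOf_pos v), addOrderOf_nsmul_eq_zero]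
    show φ (-v) ∈ H
    rw [hneg]
    exact hPsmul H v hv _
  let F : Subgroup G → AddSubgroup (ZMod (p ^ m) × ZMod (p ^ n)) := fun H =>
    { carrier := φ ⁻¹' ↑H
      zero_mem' := hPzero H
      add_mem' := fun hv hw => hPadd H _ _ hv hw
      neg_mem' := fun hv => Fmem H _ hv }
  have φzero : φ (0 : ZMod (p ^ m) × ZMod (p ^ n)) = 1 := by
    have e : φ (0 : ZMod (p ^ m) × ZMod (p ^ n)) = σ ^ (0 : ℕ) * τ ^ (0 : ℕ) := by
      apply φeq <;> simp
    rw [e]; simp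
  have castzeroN : ∀ x : ℕ, p ^ n ∣ x → ((x : ℕ) : ZMod (p ^ n)) = 0 := by
    intro x hx
    have h := (ZMod.natCast_eq_natCast_iff x 0 (p ^ n)).mpr (Nat.modEq_zero_iff_dvd.mpr hx)
    simpa using h
  let B : AddSubgroup (ZMod (p ^ m) × ZMod (p ^ n)) → Subgroup G := fun K =>
    { carrier := φ '' ↑K
      one_mem' := ⟨0, K.zero_mem, φzero⟩
      mul_mem' := by
        rintro x y ⟨v, hv, rfl⟩ ⟨w, hw, rfl⟩
        refine ⟨v + w + (v.2.val * q) • w,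
          K.add_mem (K.add_mem hv hw) (nsmul_mem hw _), ?_⟩
        rw [φdef v, φdef w, mul4]
        apply φeq
        · show v.1 + w.1 + (v.2.val * q) • w.1 = _
          rw [nsmul_eq_mul]
          push_cast
          rw [valcastM, valcastM]
          ring
        · show v.2 + w.2 + (v.2.val * q) • w.2 = _
          rw [nsmul_eq_mul, castzeroN _ (hNq.mul_left _), zero_mul, add_zero]
          push_cast
          rw [valcastN, valcastN]
      inv_mem' := by
        rintro x ⟨v, hv, rfl⟩
        have hpow : ∀ k : ℕ, (φ v) ^ k ∈ φ '' ↑K := by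
          intro k
          refine ⟨k • v + (k.choose 2 * (v.2.val * q)) • v,
            K.add_mem (nsmul_mem hv _) (nsmul_mem hv _), ?_⟩
          rw [φdef v, pow4]
          apply φeq
          · show k • v.1 + (k.choose 2 * (v.2.val * q)) • v.1 = _
            rw [nsmul_eq_mul, nsmul_eq_mul]
            push_cast
            rw [valcastM]
            ring
          · show k • v.2 + (k.choose 2 * (v.2.val * q)) • v.2 = _
            rw [nsmul_eq_mul, nsmul_eq_mul,
              castzeroN _ ((hNq.mul_left v.2.val).mul_left _), zero_mul, add_zero]
            push_cast
            rw [valcastN]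
        rw [hginv]
        exact hpow _ }
  have FB : ∀ K, F (B K) = K := by
    intro K
    exact SetLike.ext' (Set.preimage_image_eq _ φbij.injective)
  have BF : ∀ H, B (F H) = H := by
    intro H
    exact SetLike.ext' (Set.image_preimage_eq _ φsurj)
  have cardF : ∀ H : Subgroup G, Nat.card (F H) = Nat.card H := by
    intro H
    exact Nat.card_congr ((Equiv.ofBijective φ φbij).subtypeEquiv (fun v => Iff.rfl))
  have cardB : ∀ K, Nat.card (B K) = Nat.card K := by
    intro K
    have h1 := cardF (B K)
    rw [FB K] at h1
    exact h1.symm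
  constructor
  · refine ⟨τ, σ, ?_⟩
    intro hcomm
    have h0 : τ * σ * τ⁻¹ = σ := by rw [hcomm, mul_inv_cancel_right]
    rw [hrel] at h0
    have h1 : σ ^ (1 + q) = σ ^ 1 := by rw [h0, pow_one]
    have h2 : (1 + q) ≡ 1 [MOD p ^ m] := by
      have h := pow_eq_pow_iff_modEq.mp h1; rwa [hσ] at h
    have h3 : p ^ m ∣ q := by
      have h := (Nat.modEq_iff_dvd' (by omega)).mp h2.symm
      have e : 1 + q - 1 = q := by omega
      rwa [e] at h
    have h4 : p ^ m ≤ q := Nat.le_of_dvd (pow_pos hp.pos _) h3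
    have h5 : q < p ^ m := by
      rw [hqdef]
      exact Nat.pow_lt_pow_right hp.one_lt (by omega)
    omega
  · intro k
    simp only [subCount, addSubCount]
    apply Nat.card_congr
    exact
      { toFun := fun H => ⟨F H.1, by rw [cardF]; exact H.2⟩
        invFun := fun K => ⟨B K.1, by rw [cardB]; exact K.2⟩
        left_inv := fun H => Subtype.ext (BF H.1)
        right_inv := fun K => Subtype.ext (FB K.1) }
end

section
/- Let N be a positive integer such that either v_p(N) ≥ 3 for some odd prime p, or v_2(N) ≥ 4, where v_p(N) denotes the exponent of p in N. Then there exist finite groups G and G' of order N such that G is abelian, G' is nilpotent but not abelian, and a_m(G) = a_m(G') for every natural number m (i.e., G and G' have the same zeta function). -/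
/-!
Write `N = p^(m+3) M` with `p ∤ M`. The abelian group is `ℤ/p^(m+2) × ℤ/pM`; the other one is
`ℤ/p^(m+2) ⋊ ℤ/pM`, where `1 ∈ ℤ/pM` acts by multiplication with `1 + p^(m+1)`, i.e. the
modular `p`-group of order `p^(m+3)` times a cyclic group of order `M`. Both groups live on the
same set, and the two products of `a` and `b = (y, j)` differ by a factor `(p^(m+1) c y, 0)`.
That factor is a power of `b`: a power of `b^(pM)` equals `(p^(m+1) M y, 0)`, provided `p` is
odd or `m ≥ 1` (for `p = 2`, `m = 0` the twisted group is `D₈ × ℤ/M`). So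
every subgroup for one product is closed under the other product, and the two groups have the
same subgroups.
-/

open Subgroup
open scoped commutatorElement

namespace Subgroup

variable {G G' : Type*} [Group G] [Group G']

/-- In a finite group a submonoid is already a subgroup, so only closure under multiplication has
to be transported. -/
def transport [Finite G'] (e : G' ≃ G) (h1 : e 1 = 1)
    (hmul : ∀ a b, e (a * b) ∈ closure {e a, e b}) (H : Subgroup G) : Subgroup G' :=
  let S : Submonoid G' :=
    { carrier := e ⁻¹' H
      one_mem' := by simp [h1]
      mul_mem' := fun {a b} ha hb => (closure_le H).mpr (Set.pair_subset ha hb) (hmul a b) }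
  { S with
    inv_mem' := fun {x} hx => Submonoid.powers_le.mpr hx <|
      (isOfFinOrder_of_finite x).mem_powers_iff_mem_zpowers.mpr (inv_mem (mem_zpowers x)) }

@[simp]
theorem mem_transport [Finite G'] {e : G' ≃ G} {h1 : e 1 = 1}
    {hmul : ∀ a b, e (a * b) ∈ closure {e a, e b}} {H : Subgroup G} {x : G'} :
    x ∈ transport e h1 hmul H ↔ e x ∈ H :=
  Iff.rfl

end Subgroup

theorem subCount_eq_of_mul_mem_closure {G G' : Type*} [Group G] [Group G'] [Finite G]
    [Finite G'] (e : G ≃ G') (h1 : e 1 = 1) (hmul : ∀ a b, e (a * b) ∈ closure {e a, e b})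
    (hmul' : ∀ a b, e.symm (a * b) ∈ closure {e.symm a, e.symm b}) (m : ℕ) :
    subCount G m = subCount G' m := by
  have h1' : e.symm 1 = 1 := e.symm_apply_eq.mpr h1.symm
  let E : Subgroup G ≃ Subgroup G' :=
    { toFun := transport e.symm h1' hmul'
      invFun := transport e h1 hmul
      left_inv := fun H => SetLike.ext fun x => by simp
      right_inv := fun H => SetLike.ext fun x => by simp }
  refine Nat.card_congr (E.subtypeEquiv fun H => ?_)
  rw [Nat.card_congr (e.symm.subtypeEquiv fun _ => Iff.rfl : E H ≃ H)]

theorem AddChar.map_mul_map_neg {A M : Type*} [AddGroup A] [Monoid M] (ψ : AddChar A M)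
    (a : A) : ψ a * ψ (-a) = 1 := by
  rw [← AddChar.map_add_eq_mul, add_neg_cancel, AddChar.map_zero_eq_one]

/-- The semidirect product `R ⋊ A` in which `a : A` acts on `(R, +)` by multiplication with
`ψ a`. -/
@[ext]
structure Twisted {A R : Type*} [AddCommGroup A] [CommRing R] (ψ : AddChar A R) where
  fst : R
  snd : A

namespace Twisted

variable {A R : Type*} [AddCommGroup A] [CommRing R] {ψ : AddChar A R}

instance : Mul (Twisted ψ) := ⟨fun a b => ⟨a.fst + ψ a.snd * b.fst, a.snd + b.snd⟩⟩
instance : One (Twisted ψ) := ⟨⟨0, 0⟩⟩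
instance : Inv (Twisted ψ) := ⟨fun a => ⟨-(ψ (-a.snd) * a.fst), -a.snd⟩⟩

@[simp] theorem fst_mul (a b : Twisted ψ) : (a * b).fst = a.fst + ψ a.snd * b.fst := rfl
@[simp] theorem snd_mul (a b : Twisted ψ) : (a * b).snd = a.snd + b.snd := rfl
@[simp] theorem fst_one : (1 : Twisted ψ).fst = 0 := rfl
@[simp] theorem snd_one : (1 : Twisted ψ).snd = 0 := rfl
@[simp] theorem fst_inv (a : Twisted ψ) : a⁻¹.fst = -(ψ (-a.snd) * a.fst) := rfl
@[simp] theorem snd_inv (a : Twisted ψ) : a⁻¹.snd = -a.snd := rfl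

instance : Group (Twisted ψ) where
  mul_assoc a b c := by
    ext
    · simp only [fst_mul, snd_mul, AddChar.map_add_eq_mul]; ring
    · exact add_assoc ..
  one_mul a := by ext <;> simp
  mul_one a := by ext <;> simp
  inv_mul_cancel a := by ext <;> simp

def equivProd : Twisted ψ ≃ R × A where
  toFun a := (a.fst, a.snd)
  invFun a := ⟨a.1, a.2⟩

instance [Finite R] [Finite A] : Finite (Twisted ψ) := Finite.of_equiv _ equivProd.symm

theorem card : Nat.card (Twisted ψ) = Nat.card R * Nat.card A := by
  rw [Nat.card_congr equivProd, Nat.card_prod]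

theorem snd_pow (a : Twisted ψ) (k : ℕ) : (a ^ k).snd = k • a.snd := by
  induction k with
  | zero => simp
  | succ k ih => rw [pow_succ, snd_mul, ih, succ_nsmul]

theorem fst_pow (a : Twisted ψ) (k : ℕ) :
    (a ^ k).fst = (∑ l ∈ Finset.range k, ψ a.snd ^ l) * a.fst := by
  induction k with
  | zero => simp
  | succ k ih =>
    rw [pow_succ, fst_mul, ih, snd_pow, AddChar.map_nsmul_eq_pow, Finset.sum_range_succ]
    ring

def inl (r : R) : Twisted ψ := ⟨r, 0⟩

@[simp] theorem fst_inl (r : R) : (inl r : Twisted ψ).fst = r := rfl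
@[simp] theorem snd_inl (r : R) : (inl r : Twisted ψ).snd = 0 := rfl

theorem inl_pow (r : R) (k : ℕ) : (inl r : Twisted ψ) ^ k = inl (k * r) := by
  ext
  · simp [fst_pow]
  · simp [snd_pow]

theorem inl_mul_mem_zpowers {q : ℕ} [NeZero q] {ψ : AddChar A (ZMod q)} (c r : ZMod q) :
    (inl (c * r) : Twisted ψ) ∈ zpowers (inl r) := by
  simpa [inl_pow] using npow_mem_zpowers (inl r : Twisted ψ) c.val

theorem commutator_eq (a b : Twisted ψ) :
    (⁅a, b⁆ : Twisted ψ) = inl ((1 - ψ b.snd) * a.fst + (ψ a.snd - 1) * b.fst) := by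
  have h : ψ (a.snd + b.snd) * ψ (-a.snd) = ψ b.snd := by
    rw [← AddChar.map_add_eq_mul, add_neg_cancel_comm]
  ext
  · simp only [commutatorElement_def, fst_mul, snd_mul, fst_inv, snd_inv, fst_inl,
      add_neg_cancel_comm]
    linear_combination (-a.fst) * h + (-b.fst) * ψ.map_mul_map_neg b.snd
  · simp [commutatorElement_def]

theorem inl_mem_center {r : R} (hr : ∀ a, ψ a * r = r) : inl r ∈ center (Twisted ψ) :=
  mem_center_iff.mpr fun g => by ext <;> simp [hr, add_comm]

theorem isNilpotent (hψ : ∀ a b, (ψ a - 1) * (ψ b - 1) = 0) :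
    Group.IsNilpotent (Twisted ψ) := by
  refine ⟨⟨2, eq_top_iff.mpr fun x _ => ?_⟩⟩
  refine Subgroup.mem_upperCentralSeries_succ_iff.mpr fun y => ?_
  rw [Subgroup.upperCentralSeries_one, commutator_eq]
  refine inl_mem_center fun c => ?_
  linear_combination (-x.fst) * hψ c y.snd + y.fst * hψ c x.snd

theorem mul_comm_of_eq_one (a b : Twisted (1 : AddChar A R)) : a * b = b * a := by
  ext <;> simp [add_comm]

theorem exists_mul_ne_mul {a : A} (ha : ψ a ≠ 1) : ∃ x y : Twisted ψ, x * y ≠ y * x :=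
  ⟨inl 1, ⟨0, a⟩, fun h => ha (by simpa using congrArg fst h.symm)⟩

def retwist (ψ ψ' : AddChar A R) : Twisted ψ ≃ Twisted ψ' where
  toFun a := ⟨a.fst, a.snd⟩
  invFun a := ⟨a.fst, a.snd⟩

@[simp] theorem fst_retwist (ψ' : AddChar A R) (a : Twisted ψ) :
    (retwist ψ ψ' a).fst = a.fst := rfl
@[simp] theorem snd_retwist (ψ' : AddChar A R) (a : Twisted ψ) :
    (retwist ψ ψ' a).snd = a.snd := rfl

theorem retwist_mul (ψ' : AddChar A R) (a b : Twisted ψ) :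
    retwist ψ ψ' (a * b) = retwist ψ ψ' a * retwist ψ ψ' b *
      inl (ψ' (-(a.snd + b.snd)) * (ψ a.snd - ψ' a.snd) * b.fst) := by
  ext
  · simp only [fst_retwist, fst_mul, snd_mul, snd_retwist, fst_inl]
    linear_combination (-(ψ a.snd - ψ' a.snd) * b.fst) * ψ'.map_mul_map_neg (a.snd + b.snd)
  · simp

end Twisted

theorem one_add_pow_of_mul_self_eq_zero {R : Type*} [CommRing R] {x : R} (hx : x * x = 0)
    (k : ℕ) : (1 + x) ^ k = 1 + k * x := by
  induction k with
  | zero => simp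
  | succ k ih => rw [pow_succ, ih]; push_cast; linear_combination k * hx

theorem Nat.pow_dvd_sum_range_mul_pow {p m M : ℕ} (hcase : Odd p ∨ 1 ≤ m) :
    p ^ (m + 2) ∣ (∑ l ∈ Finset.range (p * M), l) * p ^ (2 * m + 1) := by
  rcases hcase with hp | hm
  · have hC : p ∣ ∑ l ∈ Finset.range (p * M), l := by
      refine hp.coprime_two_right.dvd_of_dvd_mul_right ?_
      rw [Finset.sum_range_id_mul_two, mul_assoc]
      exact dvd_mul_right _ _
    refine (pow_dvd_pow p (by omega : m + 2 ≤ 2 * m + 1 + 1)).trans ?_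
    rw [pow_succ']
    exact mul_dvd_mul hC dvd_rfl
  · exact (pow_dvd_pow p (by omega)).mul_left _

namespace ZMod

variable {p m : ℕ}

theorem mul_eq_zero_of_pow_dvd {x y : ZMod (p ^ (m + 2))}
    (hx : (p : ZMod (p ^ (m + 2))) ^ (m + 1) ∣ x)
    (hy : (p : ZMod (p ^ (m + 2))) ^ (m + 1) ∣ y) :
    x * y = 0 := by
  obtain ⟨s, rfl⟩ := hx
  obtain ⟨t, rfl⟩ := hy
  rw [mul_mul_mul_comm, ← pow_add, natCast_pow_eq_zero_of_le p (by omega), zero_mul]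

theorem one_add_pow_succ_pow (k : ℕ) :
    (1 + (p : ZMod (p ^ (m + 2))) ^ (m + 1)) ^ k = 1 + k * (p : ZMod (p ^ (m + 2))) ^ (m + 1) :=
  one_add_pow_of_mul_self_eq_zero (mul_eq_zero_of_pow_dvd dvd_rfl dvd_rfl) k

theorem pow_mul_sum_range_pow (M : ℕ) (hcase : Odd p ∨ 1 ≤ m) {w : ZMod (p ^ (m + 2))}
    (hw : (p : ZMod (p ^ (m + 2))) ^ (m + 1) ∣ w - 1) :
    (p : ZMod (p ^ (m + 2))) ^ m * ∑ l ∈ Finset.range (p * M), w ^ l = p ^ (m + 1) * M := by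
  have hpow (l : ℕ) : w ^ l = 1 + l * (w - 1) := by
    rw [← one_add_pow_of_mul_self_eq_zero (mul_eq_zero_of_pow_dvd hw hw), add_sub_cancel]
  have hC :
      (((∑ l ∈ Finset.range (p * M), l) * p ^ (2 * m + 1) : ℕ) : ZMod (p ^ (m + 2))) = 0 :=
    (natCast_eq_zero_iff _ _).mpr (Nat.pow_dvd_sum_range_mul_pow hcase)
  obtain ⟨s, hs⟩ := hw
  simp only [hpow, Finset.sum_add_distrib, ← Finset.sum_mul, Finset.sum_const, Finset.card_range,
    nsmul_one, hs] at hC ⊢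
  push_cast at hC ⊢
  linear_combination s * hC

end ZMod

namespace Twisted

variable {p m M : ℕ} [NeZero p] {ψ ψ' : AddChar (ZMod (p * M)) (ZMod (p ^ (m + 2)))}

theorem inl_mem_zpowers (hpM : p.Coprime M) (hcase : Odd p ∨ 1 ≤ m)
    (hψ : ∀ a, (p : ZMod (p ^ (m + 2))) ^ (m + 1) ∣ ψ a - 1) (b : Twisted ψ)
    (c : ZMod (p ^ (m + 2))) :
    inl ((p : ZMod (p ^ (m + 2))) ^ (m + 1) * c * b.fst) ∈ zpowers b := by
  set r := (∑ l ∈ Finset.range (p * M), ψ b.snd ^ l) * b.fst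
  have hpow : b ^ (p * M) = inl r := by
    ext
    · rw [fst_pow, fst_inl]
    · rw [snd_pow, snd_inl, nsmul_eq_mul, ZMod.natCast_self, zero_mul]
  obtain ⟨u, hu⟩ : IsUnit (M : ZMod (p ^ (m + 2))) :=
    (ZMod.isUnit_iff_coprime M _).mpr (hpM.symm.pow_right _)
  have hsum := ZMod.pow_mul_sum_range_pow M hcase (hψ b.snd)
  rw [← hu] at hsum
  have hc : (p : ZMod (p ^ (m + 2))) ^ (m + 1) * c * b.fst
      = ((p : ZMod (p ^ (m + 2))) ^ m * c * ↑u⁻¹) * r := by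
    linear_combination (-(c * ↑u⁻¹ * b.fst)) * hsum
      - ((p : ZMod (p ^ (m + 2))) ^ (m + 1) * c * b.fst) * u.inv_mul
  rw [hc]
  exact zpowers_le.mpr (hpow ▸ npow_mem_zpowers b _) (inl_mul_mem_zpowers _ _)

theorem retwist_mul_mem_closure (hpM : p.Coprime M) (hcase : Odd p ∨ 1 ≤ m)
    (hψ : ∀ a, (p : ZMod (p ^ (m + 2))) ^ (m + 1) ∣ ψ a - 1)
    (hψ' : ∀ a, (p : ZMod (p ^ (m + 2))) ^ (m + 1) ∣ ψ' a - 1) (a b : Twisted ψ) :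
    retwist ψ ψ' (a * b) ∈ closure {retwist ψ ψ' a, retwist ψ ψ' b} := by
  obtain ⟨c, hc⟩ :=
    sub_sub_sub_cancel_right (ψ a.snd) (ψ' a.snd) 1 ▸ dvd_sub (hψ a.snd) (hψ' a.snd)
  have ha' : retwist ψ ψ' a ∈ closure {retwist ψ ψ' a, retwist ψ ψ' b} :=
    subset_closure (Set.mem_insert _ _)
  have hb' : retwist ψ ψ' b ∈ closure {retwist ψ ψ' a, retwist ψ ψ' b} :=
    subset_closure (Set.mem_insert_of_mem _ rfl)
  rw [retwist_mul, hc]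
  refine mul_mem (mul_mem ha' hb') (zpowers_le.mpr hb' ?_)
  convert inl_mem_zpowers hpM hcase hψ' (retwist ψ ψ' b) (ψ' (-(a.snd + b.snd)) * c) using 2
  simp only [fst_retwist]
  ring

theorem subCount_eq [NeZero M] (hpM : p.Coprime M) (hcase : Odd p ∨ 1 ≤ m)
    (hψ : ∀ a, (p : ZMod (p ^ (m + 2))) ^ (m + 1) ∣ ψ a - 1)
    (hψ' : ∀ a, (p : ZMod (p ^ (m + 2))) ^ (m + 1) ∣ ψ' a - 1) (k : ℕ) :
    subCount (Twisted ψ) k = subCount (Twisted ψ') k :=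
  subCount_eq_of_mul_mem_closure (retwist ψ ψ') rfl (retwist_mul_mem_closure hpM hcase hψ hψ')
    (retwist_mul_mem_closure hpM hcase hψ' hψ) k

end Twisted

def modularChar (p m M : ℕ) [NeZero (p * M)] : AddChar (ZMod (p * M)) (ZMod (p ^ (m + 2))) :=
  AddChar.zmodChar (p * M) (ζ := 1 + (p : ZMod (p ^ (m + 2))) ^ (m + 1)) <| by
    rw [ZMod.one_add_pow_succ_pow, Nat.cast_mul, mul_right_comm, ← pow_succ',
      ZMod.natCast_pow_eq_zero_of_le p le_rfl, zero_mul, add_zero]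

section modularChar

variable {p m M : ℕ} [NeZero (p * M)]

theorem pow_dvd_modularChar_sub_one (a : ZMod (p * M)) :
    (p : ZMod (p ^ (m + 2))) ^ (m + 1) ∣ modularChar p m M a - 1 :=
  ⟨a.val, by rw [modularChar, AddChar.zmodChar_apply, ZMod.one_add_pow_succ_pow]; ring⟩

theorem modularChar_natCast_one_ne_one (hp : 1 < p) : modularChar p m M (1 : ℕ) ≠ 1 := by
  rw [modularChar, AddChar.zmodChar_apply', pow_one, ne_eq, add_eq_left, ← Nat.cast_pow,
    ZMod.natCast_eq_zero_iff, Nat.pow_dvd_pow_iff_le_right hp]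
  omega

end modularChar

theorem Nat.exists_prime_pow_mul_eq {N : ℕ} (hN : 0 < N)
    (h : (∃ p : ℕ, p.Prime ∧ Odd p ∧ 3 ≤ N.factorization p) ∨ 4 ≤ N.factorization 2) :
    ∃ p m M, p.Prime ∧ p.Coprime M ∧ (Odd p ∨ 1 ≤ m) ∧ p ^ (m + 3) * M = N := by
  obtain ⟨p, hp, hcase, h3⟩ :
      ∃ p, p.Prime ∧ (Odd p ∨ 4 ≤ N.factorization p) ∧ 3 ≤ N.factorization p := by
    rcases h with ⟨p, hp, hodd, h3⟩ | h4
    · exact ⟨p, hp, .inl hodd, h3⟩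
    · exact ⟨2, Nat.prime_two, .inr h4, by omega⟩
  refine ⟨p, N.factorization p - 3, N / p ^ N.factorization p, hp, coprime_ordCompl hp hN.ne',
    hcase.imp_right fun h4 => by omega, ?_⟩
  rw [show N.factorization p - 3 + 3 = N.factorization p by omega]
  exact ordProj_mul_ordCompl_eq_self N p

/-- If `N` is a positive integer with `v_p(N) ≥ 3` for some odd prime `p`, or
`v_2(N) ≥ 4`, then there exist an abelian group and a non-abelian nilpotent group,
both of order `N`, having the same zeta function. -/
theorem stmt_7 (N : ℕ) (hN : 0 < N)
    (h : (∃ p : ℕ, p.Prime ∧ Odd p ∧ 3 ≤ N.factorization p) ∨ 4 ≤ N.factorization 2) :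
    ∃ (G G' : Type) (_ : Group G) (_ : Group G') (_ : Finite G) (_ : Finite G'),
      Nat.card G = N ∧ Nat.card G' = N ∧
      (∀ a b : G, a * b = b * a) ∧
      Group.IsNilpotent G' ∧ (∃ a b : G', a * b ≠ b * a) ∧
      (∀ m : ℕ, subCount G m = subCount G' m) := by
  obtain ⟨p, m, M, hp, hpM, hcase, rfl⟩ := Nat.exists_prime_pow_mul_eq hN h
  have : NeZero p := ⟨hp.ne_zero⟩
  have : NeZero M := ⟨by rintro rfl; simp at hN⟩
  have hcard (ψ : AddChar (ZMod (p * M)) (ZMod (p ^ (m + 2)))) :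
      Nat.card (Twisted ψ) = p ^ (m + 3) * M := by
    rw [Twisted.card, Nat.card_zmod, Nat.card_zmod]; ring
  have hnilp : Group.IsNilpotent (Twisted (modularChar p m M)) :=
    Twisted.isNilpotent fun a b => ZMod.mul_eq_zero_of_pow_dvd
      (pow_dvd_modularChar_sub_one a) (pow_dvd_modularChar_sub_one b)
  exact ⟨Twisted (1 : AddChar (ZMod (p * M)) (ZMod (p ^ (m + 2)))), Twisted (modularChar p m M),
    inferInstance, inferInstance, inferInstance, inferInstance, hcard _, hcard _,
    Twisted.mul_comm_of_eq_one, hnilp,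
    Twisted.exists_mul_ne_mul (modularChar_natCast_one_ne_one hp.one_lt),
    Twisted.subCount_eq hpM hcase (by simp) pow_dvd_modularChar_sub_one⟩
end

section
/- Let p be a prime and λ = (λ_1, …, λ_n) a partition with n ≥ 1, and let λ̃ = (λ_1 + 1, λ_2, …, λ_n). Then for every integer j ≥ 1: N_j(λ̃; p) = N_{j−1}(λ; p) + p^j N_j(λ'; p). -/
/-!
Write the group of `λ̃` as `K × ℤ/p^{a+1}`, where `K = G_{λ'}` has exponent dividing `p^a`, and
let `z = (0, p^a)`. The subgroups containing `z` are the preimages of subgroups of the quotient by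
`⟨z⟩`, which is `K × ℤ/p^a`, of one `p`-power smaller order. A subgroup not containing `z` meets
`0 × ℤ/p^{a+1}` trivially, since every nonzero subgroup of `ℤ/p^{a+1}` contains `p^a`; so it is the
graph of a homomorphism `L → ℤ/p^{a+1}` on its projection `L ≤ K`. As the exponent of `L` divides
`p^{a+1}`, there are exactly `|L|` such homomorphisms, which accounts for `p^j N_j(λ')`.
-/

/-- `Nk p l k` is the number of subgroups of order `p^k` of the abelian `p`-group
`G_λ(p) = ℤ/p^{λ_1}ℤ × ⋯ × ℤ/p^{λ_n}ℤ`, where `λ` is given by the list `l`. -/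
noncomputable def Nk (p : ℕ) (l : List ℕ) (k : ℕ) : ℕ :=
  Nat.card {H : AddSubgroup (∀ i : Fin l.length, ZMod (p ^ l.get i)) // Nat.card H = p ^ k}

noncomputable def numAddSubgroupsOfCard (A : Type*) [AddGroup A] (n : ℕ) : ℕ :=
  Nat.card {H : AddSubgroup A // Nat.card H = n}

theorem Nat.card_subtype_and_add_card_subtype_and_not {α : Type*} [Finite α] (P Q : α → Prop) :
    Nat.card {x // P x ∧ Q x} + Nat.card {x // P x ∧ ¬Q x} = Nat.card {x // P x} := by
  classical
  rw [← Nat.card_sum]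
  exact Nat.card_congr ((Equiv.sumCongr (Equiv.subtypeSubtypeEquivSubtypeInter P Q).symm
    (Equiv.subtypeSubtypeEquivSubtypeInter P fun x => ¬Q x).symm).trans
    (Equiv.sumCompl fun x : {x // P x} => Q x.1))

section AddGroup

variable {A B : Type*} [AddGroup A] [AddGroup B]

theorem numAddSubgroupsOfCard_congr (e : A ≃+ B) (n : ℕ) :
    numAddSubgroupsOfCard A n = numAddSubgroupsOfCard B n :=
  Nat.card_congr <| e.mapAddSubgroup.toEquiv.subtypeEquiv fun H => by
    rw [← AddSubgroup.card_mapAddSubgroup H e]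
    rfl

theorem AddMonoidHom.card_eq_card_mul_card_ker_of_surjective [Finite A] {φ : A →+ B}
    (hφ : Function.Surjective φ) : Nat.card A = Nat.card B * Nat.card φ.ker := by
  rw [φ.ker.card_eq_card_quotient_mul_card_addSubgroup,
    Nat.card_congr (QuotientAddGroup.quotientKerEquivOfSurjective φ hφ).toEquiv]

theorem AddSubgroup.card_comap_of_surjective [Finite A] {φ : A →+ B}
    (hφ : Function.Surjective φ) (L : AddSubgroup B) :
    Nat.card (L.comap φ) = Nat.card φ.ker * Nat.card L := by
  have : Finite B := Finite.of_surjective φ hφ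
  refine Nat.eq_of_mul_eq_mul_right (Nat.pos_of_ne_zero L.index_ne_zero_of_finite) ?_
  rw [← L.index_comap_of_surjective hφ, card_mul_index, index_comap_of_surjective _ hφ,
    mul_assoc, card_mul_index, φ.card_eq_card_mul_card_ker_of_surjective hφ, mul_comm]

theorem card_addSubgroups_card_eq_and_ker_le [Finite A] {φ : A →+ B}
    (hφ : Function.Surjective φ) (n : ℕ) :
    Nat.card {H : AddSubgroup A // Nat.card H = Nat.card φ.ker * n ∧ φ.ker ≤ H} =
      numAddSubgroupsOfCard B n := by
  have hcomap (L : AddSubgroup B) := AddSubgroup.card_comap_of_surjective hφ L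
  refine Nat.card_congr
    { toFun := fun H => ⟨H.1.map φ, Nat.eq_of_mul_eq_mul_left (Nat.card_pos (α := φ.ker)) ?_⟩
      invFun := fun L => ⟨L.1.comap φ, by rw [hcomap, L.2], fun x hx => ?_⟩
      left_inv := fun H => Subtype.ext (AddSubgroup.comap_map_eq_self H.2.2)
      right_inv := fun L => Subtype.ext (AddSubgroup.map_comap_eq_self_of_surjective hφ L.1) }
  · rw [← hcomap, AddSubgroup.comap_map_eq_self H.2.2, H.2.1]
  · simp [AddMonoidHom.mem_ker.mp hx]

end AddGroup

section Graph

variable {R E F : Type*} [Ring R] [AddCommGroup E] [Module R E] [AddCommGroup F] [Module R F]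

noncomputable def LinearPMap.equivGraph :
    (E →ₗ.[R] F) ≃ {g : Submodule R (E × F) // ∀ x ∈ g, x.1 = 0 → x.2 = 0} where
  toFun f := ⟨f.graph, fun _ hx => f.graph_fst_eq_zero_snd hx⟩
  invFun g := g.1.toLinearPMap
  left_inv f := LinearPMap.eq_of_eq_graph
    (Submodule.toLinearPMap_graph_eq _ fun _ hx => f.graph_fst_eq_zero_snd hx)
  right_inv g := Subtype.ext (Submodule.toLinearPMap_graph_eq _ g.2)

theorem LinearPMap.card_graph (f : E →ₗ.[R] F) : Nat.card f.graph = Nat.card f.domain :=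
  Nat.card_congr <| .symm <| .ofBijective (fun x => ⟨((x : E), f x), f.mem_graph x⟩)
    ⟨fun x y h => Subtype.ext (congrArg (fun v : f.graph => (v : E × F).1) h), fun v => by
      obtain ⟨y, hy⟩ := (f.mem_graph_iff' (x := v)).mp v.2
      exact ⟨y, Subtype.ext hy⟩⟩

theorem card_submodules_graph (n : ℕ) :
    Nat.card {g : Submodule R (E × F) // (∀ x ∈ g, x.1 = 0 → x.2 = 0) ∧ Nat.card g = n} =
      Nat.card (Σ L : {L : Submodule R E // Nat.card L = n}, L →ₗ[R] F) := by
  refine Nat.card_congr <| (Equiv.subtypeSubtypeEquivSubtypeInter _ _).symm.trans <|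
    (LinearPMap.equivGraph.symm.subtypeEquiv (q := fun f => Nat.card f.domain = n)
      fun g => ?_).trans
    { toFun := fun f => ⟨⟨f.1.domain, f.2⟩, f.1.toFun⟩
      invFun := fun f => ⟨(⟨f.1.1, f.2⟩ : E →ₗ.[R] F), f.1.2⟩
      left_inv := fun _ => rfl
      right_inv := fun _ => rfl }
  rw [← LinearPMap.card_graph]
  change _ ↔ Nat.card (LinearPMap.equivGraph (LinearPMap.equivGraph.symm g)).1 = n
  rw [Equiv.apply_symm_apply]

end Graph

instance ZMod.hasEnoughRootsOfUnity_multiplicative (N : ℕ) [NeZero N] :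
    HasEnoughRootsOfUnity (Multiplicative (ZMod N)) N where
  prim := ⟨.ofAdd 1, by
    simpa [orderOf_ofAdd_eq_addOrderOf] using
      IsPrimitiveRoot.orderOf (Multiplicative.ofAdd (1 : ZMod N))⟩
  cyc := have : IsCyclic (Multiplicative (ZMod N))ˣ := isCyclic_of_surjective _ toUnits.surjective
    inferInstance

theorem ZMod.card_addMonoidHom_of_exponent_dvd {L : Type*} [AddCommGroup L] [Finite L] {N : ℕ}
    [NeZero N] (hL : AddMonoid.exponent L ∣ N) : Nat.card (L →+ ZMod N) = Nat.card L := by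
  have : HasEnoughRootsOfUnity (Multiplicative (ZMod N)) (Monoid.exponent (Multiplicative L)) :=
    HasEnoughRootsOfUnity.of_dvd _ (Monoid.exponent_multiplicative (G := L) ▸ hL)
  calc Nat.card (L →+ ZMod N)
      = Nat.card (Multiplicative L →* (Multiplicative (ZMod N))ˣ) :=
        Nat.card_congr (AddMonoidHom.toMultiplicative.trans
          (MulEquiv.monoidHomCongrRight toUnits).toEquiv)
    _ = Nat.card L :=
        CommGroup.card_monoidHom_of_hasEnoughRootsOfUnity (Multiplicative L) _

theorem ZMod.natCast_gcd_val_mem_zmultiples {n : ℕ} [NeZero n] (x : ZMod n) :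
    ((x.val.gcd n : ℕ) : ZMod n) ∈ AddSubgroup.zmultiples x :=
  ⟨x.val.gcdA n, by
    change (x.val.gcdA n : ℤ) • x = _
    rw [zsmul_eq_mul, ← Int.cast_natCast, Nat.gcd_eq_gcd_ab]
    push_cast
    simp [mul_comm]⟩

theorem ZMod.natCast_pow_mem_zmultiples {p a : ℕ} (hp : p.Prime) {x : ZMod (p ^ (a + 1))}
    (hx : x ≠ 0) : ((p ^ a : ℕ) : ZMod (p ^ (a + 1))) ∈ AddSubgroup.zmultiples x := by
  have : NeZero (p ^ (a + 1)) := ⟨pow_ne_zero _ hp.ne_zero⟩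
  obtain ⟨s, hs, hgcd⟩ := (Nat.dvd_prime_pow hp).mp (Nat.gcd_dvd_right x.val (p ^ (a + 1)))
  have hsa : s ≤ a := by
    by_contra! h
    obtain rfl : s = a + 1 := by omega
    have hdvd := Nat.gcd_dvd_left x.val (p ^ (a + 1))
    rw [hgcd] at hdvd
    exact hx ((ZMod.val_eq_zero x).mp (Nat.eq_zero_of_dvd_of_lt hdvd (ZMod.val_lt x)))
  have := AddSubgroup.nsmul_mem _ (ZMod.natCast_gcd_val_mem_zmultiples x) (p ^ (a - s))
  rwa [hgcd, nsmul_eq_mul, ← Nat.cast_mul, ← pow_add, Nat.sub_add_cancel hsa] at this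

theorem ZMod.addOrderOf_natCast_pow {p a : ℕ} (hp : p.Prime) :
    addOrderOf ((p ^ a : ℕ) : ZMod (p ^ (a + 1))) = p := by
  rw [ZMod.addOrderOf_coe _ (pow_ne_zero _ hp.ne_zero), Nat.gcd_eq_right (pow_dvd_pow p a.le_succ),
    pow_succ, Nat.mul_div_cancel_left _ (pow_pos hp.pos a)]

theorem AddSubgroup.mk_zero_natCast_pow_notMem_iff {p a : ℕ} (hp : p.Prime) {K : Type*}
    [AddGroup K] (H : AddSubgroup (K × ZMod (p ^ (a + 1)))) :
    ((0 : K), ((p ^ a : ℕ) : ZMod (p ^ (a + 1)))) ∉ H ↔ ∀ x ∈ H, x.1 = 0 → x.2 = 0 := by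
  refine ⟨fun hz x hx hx1 => ?_, fun h hz => ?_⟩
  · by_contra hx2
    obtain ⟨k, hk⟩ := ZMod.natCast_pow_mem_zmultiples hp hx2
    refine hz ?_
    convert H.zsmul_mem hx k using 1
    exact Prod.ext (by simp [hx1]) hk.symm
  · have h0 := h _ hz rfl
    rw [ZMod.natCast_eq_zero_iff, Nat.pow_dvd_pow_iff_le_right hp.one_lt] at h0
    omega

section PrimePower

variable {p a : ℕ} {K : Type*} [AddCommGroup K] [Finite K]

theorem card_addSubgroups_card_eq_and_mem (hp : p.Prime) {j : ℕ} (hj : 1 ≤ j) :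
    Nat.card {H : AddSubgroup (K × ZMod (p ^ (a + 1))) //
        Nat.card H = p ^ j ∧ ((0 : K), ((p ^ a : ℕ) : ZMod (p ^ (a + 1)))) ∈ H} =
      numAddSubgroupsOfCard (K × ZMod (p ^ a)) (p ^ (j - 1)) := by
  have : NeZero (p ^ (a + 1)) := ⟨pow_ne_zero _ hp.ne_zero⟩
  have : NeZero (p ^ a) := ⟨pow_ne_zero _ hp.ne_zero⟩
  have hdvd : p ^ a ∣ p ^ (a + 1) := pow_dvd_pow p a.le_succ
  set z : K × ZMod (p ^ (a + 1)) := (0, ((p ^ a : ℕ) : ZMod (p ^ (a + 1))))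
  let φ : K × ZMod (p ^ (a + 1)) →+ K × ZMod (p ^ a) :=
    (AddMonoidHom.id K).prodMap (ZMod.castHom hdvd (ZMod (p ^ a))).toAddMonoidHom
  have hφ : Function.Surjective φ :=
    Function.surjective_id.prodMap (ZMod.castHom_surjective hdvd)
  have hker_card : Nat.card φ.ker = p := by
    have h := φ.card_eq_card_mul_card_ker_of_surjective hφ
    rw [Nat.card_prod, Nat.card_prod, Nat.card_zmod, Nat.card_zmod] at h
    refine (Nat.eq_of_mul_eq_mul_left
      (Nat.mul_pos (Nat.card_pos (α := K)) (pow_pos hp.pos a)) ?_).symm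
    rw [← h, pow_succ, mul_assoc]
  have hker : φ.ker = AddSubgroup.zmultiples z := by
    refine (AddSubgroup.eq_of_le_of_card_ge (AddSubgroup.zmultiples_le.2 ?_) ?_).symm
    · refine Prod.ext rfl ?_
      change ZMod.castHom hdvd _ ((p ^ a : ℕ) : ZMod (p ^ (a + 1))) = 0
      rw [map_natCast, ZMod.natCast_self]
    · rw [hker_card, Nat.card_zmultiples, Prod.addOrderOf_mk, addOrderOf_zero, Nat.lcm_one_left,
        ZMod.addOrderOf_natCast_pow hp]
  rw [← card_addSubgroups_card_eq_and_ker_le hφ, hker_card]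
  refine Nat.card_congr (Equiv.subtypeEquivRight fun H => ?_)
  rw [hker, AddSubgroup.zmultiples_le, ← pow_succ', Nat.sub_add_cancel hj]

theorem card_addSubgroups_card_eq_and_notMem (hp : p.Prime) (hK : AddMonoid.exponent K ∣ p ^ a)
    (n : ℕ) :
    Nat.card {H : AddSubgroup (K × ZMod (p ^ (a + 1))) //
        Nat.card H = n ∧ ((0 : K), ((p ^ a : ℕ) : ZMod (p ^ (a + 1)))) ∉ H} =
      n * numAddSubgroupsOfCard K n := by
  have : NeZero (p ^ (a + 1)) := ⟨pow_ne_zero _ hp.ne_zero⟩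
  have hhom (L : Submodule ℤ K) :
      Nat.card (L →ₗ[ℤ] ZMod (p ^ (a + 1))) = Nat.card L := by
    rw [← Nat.card_congr (addMonoidHomLequivInt ℤ).toEquiv]
    exact ZMod.card_addMonoidHom_of_exponent_dvd
      ((AddMonoid.exponent_dvd_of_addMonoidHom L.subtype.toAddMonoidHom
        Subtype.val_injective).trans (hK.trans (pow_dvd_pow p a.le_succ)))
  have (L : Submodule ℤ K) : Finite (L →ₗ[ℤ] ZMod (p ^ (a + 1))) :=
    Finite.of_injective _ DFunLike.coe_injective
  have : Fintype {L : Submodule ℤ K // Nat.card L = n} := Fintype.ofFinite _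
  calc _ = Nat.card {g : Submodule ℤ (K × ZMod (p ^ (a + 1))) //
          (∀ x ∈ g, x.1 = 0 → x.2 = 0) ∧ Nat.card g = n} :=
        Nat.card_congr (AddSubgroup.toIntSubmodule.toEquiv.subtypeEquiv fun H => by
          rw [AddSubgroup.mk_zero_natCast_pow_notMem_iff hp, and_comm]; rfl)
    _ = Nat.card (Σ L : {L : Submodule ℤ K // Nat.card L = n}, L.1 →ₗ[ℤ] ZMod (p ^ (a + 1))) :=
        card_submodules_graph n
    _ = n * Nat.card {L : Submodule ℤ K // Nat.card L = n} := by
        rw [Nat.card_sigma, Finset.sum_congr rfl fun L _ => (hhom L.1).trans L.2,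
          Finset.sum_const, Finset.card_univ, smul_eq_mul, Nat.card_eq_fintype_card, mul_comm]
    _ = n * numAddSubgroupsOfCard K n :=
        congrArg (n * ·) (Nat.card_congr
          (AddSubgroup.toIntSubmodule.toEquiv.subtypeEquiv fun _ => Iff.rfl).symm)

theorem numAddSubgroupsOfCard_prod_zmod_pow_succ (hp : p.Prime)
    (hK : AddMonoid.exponent K ∣ p ^ a) {j : ℕ} (hj : 1 ≤ j) :
    numAddSubgroupsOfCard (K × ZMod (p ^ (a + 1))) (p ^ j) =
      numAddSubgroupsOfCard (K × ZMod (p ^ a)) (p ^ (j - 1)) +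
        p ^ j * numAddSubgroupsOfCard K (p ^ j) := by
  have : NeZero (p ^ (a + 1)) := ⟨pow_ne_zero _ hp.ne_zero⟩
  have : Finite (AddSubgroup (K × ZMod (p ^ (a + 1)))) :=
    Finite.of_injective _ SetLike.coe_injective
  rw [← card_addSubgroups_card_eq_and_mem hp hj, ← card_addSubgroups_card_eq_and_notMem hp hK]
  exact (Nat.card_subtype_and_add_card_subtype_and_not _ _).symm

end PrimePower

theorem Nk_cons (p x : ℕ) (t : List ℕ) (k : ℕ) :
    Nk p (x :: t) k =
      numAddSubgroupsOfCard ((∀ i : Fin t.length, ZMod (p ^ t.get i)) × ZMod (p ^ x)) (p ^ k) :=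
  numAddSubgroupsOfCard_congr
    ((Fin.consLinearEquiv ℤ fun i => ZMod (p ^ (x :: t).get i)).toAddEquiv.symm.trans
      AddEquiv.prodComm) _

theorem exponent_pi_zmod_pow_dvd (p : ℕ) {a : ℕ} {t : List ℕ} (ht : ∀ x ∈ t, x ≤ a) :
    AddMonoid.exponent (∀ i : Fin t.length, ZMod (p ^ t.get i)) ∣ p ^ a :=
  AddMonoid.exponent_dvd_of_forall_nsmul_eq_zero fun x => funext fun i => by
    rw [Pi.smul_apply, nsmul_eq_mul, Pi.zero_apply,
      (ZMod.natCast_eq_zero_iff _ _).2 (pow_dvd_pow p (ht _ (t.get_mem i))), zero_mul]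

theorem stmt_13_general (p : ℕ) (hp : p.Prime) (a : ℕ) (t : List ℕ)
    (hsort : (a :: t).Pairwise (· ≥ ·))
    (j : ℕ) (hj : 1 ≤ j) :
    Nk p ((a + 1) :: t) j = Nk p (a :: t) (j - 1) + p ^ j * Nk p t j := by
  have : NeZero p := ⟨hp.ne_zero⟩
  rw [Nk_cons, Nk_cons]
  exact numAddSubgroupsOfCard_prod_zmod_pow_succ hp
    (exponent_pi_zmod_pow_dvd p fun _ hx => List.rel_of_pairwise_cons hsort hx) hj

/-- For a partition `λ = (λ_1, …, λ_n)` with `n ≥ 1`, letting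
`λ̃ = (λ_1 + 1, λ_2, …, λ_n)` and `λ' = (λ_2, …, λ_n)`, one has for all `j ≥ 1`:
`N_j(λ̃) = N_{j−1}(λ) + p^j N_j(λ')`. -/
theorem stmt_13 (p : ℕ) (hp : p.Prime) (a : ℕ) (t : List ℕ)
    (hsort : (a :: t).Pairwise (· ≥ ·)) (hpos : ∀ x ∈ a :: t, 0 < x)
    (j : ℕ) (hj : 1 ≤ j) :
    Nk p ((a + 1) :: t) j = Nk p (a :: t) (j - 1) + p ^ j * Nk p t j :=
  stmt_13_general p hp a t hsort j hj
end

section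
/- Let p be a prime, r ≥ 0 an integer, and G a finite group such that a_m(G) = a_m(ℤ/p^rℤ) for every natural number m (i.e., G has the same zeta function as the cyclic group of order p^r). Then G is isomorphic to ℤ/p^rℤ. -/
lemma addSubCount_eq_subCount (A : Type*) [AddGroup A] (m : ℕ) :
    addSubCount A m = subCount (Multiplicative A) m := by
  unfold addSubCount subCount
  exact Nat.card_congr (Equiv.subtypeEquiv AddSubgroup.toSubgroup.toEquiv (fun H => Iff.rfl))

lemma subCount_pos_iff (X : Type*) [Group X] [Finite X] (m : ℕ) :
    0 < subCount X m ↔ ∃ H : Subgroup X, Nat.card H = m := by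
  unfold subCount
  rw [Nat.card_pos_iff]
  constructor
  · rintro ⟨⟨H, hH⟩, -⟩; exact ⟨H, hH⟩
  · rintro ⟨H, hH⟩; exact ⟨⟨⟨H, hH⟩⟩, inferInstance⟩

/-- In a finite cyclic group, two subgroups of the same cardinality are equal. -/
lemma cyclic_subgroup_eq_of_card_eq {α : Type*} [Group α] [Finite α] [IsCyclic α]
    {H K : Subgroup α} (h : Nat.card H = Nat.card K) : H = K := by
  classical
  have := Fintype.ofFinite α
  have key : ∀ L : Subgroup α, (L : Set α) = {a : α | a ^ Nat.card L = 1} := by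
    intro L
    have hpos : 0 < Nat.card L := Nat.card_pos
    have hsub : (L : Set α).toFinset ⊆ ({a : α | a ^ Nat.card L = 1} : Finset α) := by
      intro x hx
      simp only [Set.mem_toFinset, SetLike.mem_coe] at hx
      simp only [Finset.mem_filter, Finset.mem_univ, true_and]
      have : (⟨x, hx⟩ : L) ^ Nat.card L = 1 := pow_card_eq_one'
      exact_mod_cast congrArg (Subgroup.subtype L) this
    have hcard : (({a : α | a ^ Nat.card L = 1} : Finset α)).card ≤ (L : Set α).toFinset.card := by
      rw [Set.toFinset_card]
      calc (({a : α | a ^ Nat.card L = 1} : Finset α)).card ≤ Nat.card L :=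
            IsCyclic.card_pow_eq_one_le hpos
        _ = Fintype.card (L : Set α) := by
            rw [Nat.card_eq_fintype_card]; rfl
    have := Finset.eq_of_subset_of_card_le hsub hcard
    ext x
    constructor
    · intro hx
      have : x ∈ ({a : α | a ^ Nat.card L = 1} : Finset α) := by
        rw [← this]; simpa using hx
      simpa using this
    · intro hx
      have : x ∈ (L : Set α).toFinset := by
        rw [this]; simpa using hx
      simpa using this
  apply SetLike.ext'
  rw [key H, key K, h]

/-- A finite group with the same zeta function as the cyclic group `ℤ/p^rℤ`
is isomorphic to `ℤ/p^rℤ`. -/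
theorem stmt_18 (p r : ℕ) (hp : p.Prime) (G : Type*) [Group G] [Finite G]
    (h : ∀ m : ℕ, subCount G m = addSubCount (ZMod (p ^ r)) m) :
    Nonempty (G ≃* Multiplicative (ZMod (p ^ r))) := by
  classical
  have hpfact : Fact p.Prime := ⟨hp⟩
  set n := p ^ r with hn_def
  have hn : 0 < n := pow_pos hp.pos r
  haveI : NeZero n := ⟨hn.ne'⟩
  set C := Multiplicative (ZMod n) with hC_def
  have hcardC : Nat.card C = n := by simp [hC_def, Nat.card_zmod]
  have h' : ∀ m, subCount G m = subCount C m := fun m =>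
    (h m).trans (addSubCount_eq_subCount _ m)
  -- subCount C m = 1 for m ∣ n
  have hC1 : ∀ m, m ∣ n → subCount C m = 1 := by
    intro m hm
    obtain ⟨k, hk, hmk⟩ := (Nat.dvd_prime_pow hp).mp hm
    have hex : ∃ H : Subgroup C, Nat.card H = m := by
      subst hmk
      exact Sylow.exists_subgroup_card_pow_prime p (by rw [hcardC]; exact hm)
    have hpos : 0 < subCount C m := (subCount_pos_iff C m).mpr hex
    have hle : subCount C m ≤ 1 := by
      unfold subCount
      rw [Finite.card_le_one_iff_subsingleton]
      constructor
      rintro ⟨H, hH⟩ ⟨K, hK⟩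
      have := cyclic_subgroup_eq_of_card_eq (H := H) (K := K) (hH.trans hK.symm)
      subst this; rfl
    omega
  -- uniqueness in G
  have hGuniq : ∀ m, m ∣ n → ∀ H K : Subgroup G, Nat.card H = m → Nat.card K = m → H = K := by
    intro m hm H K hH hK
    have h1 : subCount G m = 1 := (h' m).trans (hC1 m hm)
    have : Subsingleton {H : Subgroup G // Nat.card H = m} := by
      rw [← Finite.card_le_one_iff_subsingleton]
      unfold subCount at h1
      omega
    have := @Subsingleton.elim _ this ⟨H, hH⟩ ⟨K, hK⟩
    exact congrArg Subtype.val this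
  -- card G = n
  have hcardG : Nat.card G = n := by
    have h1 : Nat.card G ∣ n := by
      have hpos : 0 < subCount C (Nat.card G) := by
        rw [← h']
        exact (subCount_pos_iff G _).mpr ⟨⊤, Nat.card_congr Subgroup.topEquiv.toEquiv⟩
      obtain ⟨H, hH⟩ := (subCount_pos_iff C _).mp hpos
      have hd := Subgroup.card_subgroup_dvd_card H
      rw [hH, hcardC] at hd
      exact hd
    have h2 : n ∣ Nat.card G := by
      have hpos : 0 < subCount G n := by
        rw [h']
        exact (subCount_pos_iff C _).mpr ⟨⊤, by rw [Nat.card_congr Subgroup.topEquiv.toEquiv, hcardC]⟩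
      obtain ⟨H, hH⟩ := (subCount_pos_iff G _).mp hpos
      rw [← hH]
      exact Subgroup.card_subgroup_dvd_card H
    exact Nat.dvd_antisymm h1 h2
  have hpG : IsPGroup p G := IsPGroup.of_card (by rw [hcardG, hn_def])
  -- G is cyclic
  have := Fintype.ofFinite G
  have hGcyc : IsCyclic G := by
    apply isCyclic_of_card_pow_eq_one_le
    intro m hm
    set d := Nat.gcd m n with hd_def
    have hdn : d ∣ n := Nat.gcd_dvd_right m n
    have hdm : d ∣ m := Nat.gcd_dvd_left m n
    have hdpos : 0 < d := Nat.gcd_pos_of_pos_left n hm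
    -- the unique subgroup of G of order d
    obtain ⟨Hd, hHd⟩ : ∃ H : Subgroup G, Nat.card H = d := by
      obtain ⟨k, hk, hdk⟩ := (Nat.dvd_prime_pow hp).mp hdn
      rw [hdk]
      exact Sylow.exists_subgroup_card_pow_prime p (by rw [hcardG, ← hdk]; exact hdn)
    have hsub : ({a : G | a ^ m = 1} : Finset G) ⊆ (Hd : Set G).toFinset := by
      intro x hx
      simp only [Finset.mem_filter, Finset.mem_univ, true_and] at hx
      have hxd : x ^ d = 1 := by
        have h1 : orderOf x ∣ m := orderOf_dvd_of_pow_eq_one hx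
        have h2 : orderOf x ∣ n := by rw [← hcardG]; exact orderOf_dvd_natCard x
        exact orderOf_dvd_iff_pow_eq_one.mp (Nat.dvd_gcd h1 h2)
      -- zpowers x has order p^j dividing d
      have hzx : Nat.card (Subgroup.zpowers x) ∣ d := by
        rw [Nat.card_zpowers]
        exact orderOf_dvd_of_pow_eq_one hxd
      have hle : Nat.card (Subgroup.zpowers x) ≤ Nat.card Hd := by
        rw [hHd]; exact Nat.le_of_dvd hdpos hzx
      obtain ⟨j, hj, hjx⟩ := (Nat.dvd_prime_pow hp).mp (hzx.trans hdn)
      obtain ⟨H', hH'le, hH'card⟩ :=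
        Sylow.exists_subgroup_le_card_pow_prime_of_le_card hp hpG
          (H := Hd) (n := j) (by rw [← hjx]; exact hle)
      have : Subgroup.zpowers x = H' :=
        hGuniq (p ^ j) ((hjx ▸ hzx).trans hdn) _ _ hjx hH'card
      have hxHd : x ∈ Hd := hH'le (this ▸ Subgroup.mem_zpowers x)
      simpa using hxHd
    calc (({a : G | a ^ m = 1} : Finset G)).card ≤ (Hd : Set G).toFinset.card :=
          Finset.card_le_card hsub
      _ = d := by rw [Set.toFinset_card, ← Nat.card_eq_fintype_card]; exact hHd
      _ ≤ m := Nat.le_of_dvd hm hdm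
  exact ⟨mulEquivOfCyclicCardEq (by rw [hcardG, hcardC])⟩
end
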